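/- The lowest-order function edge mode φ̂_{0,0}(x̂,ŷ) = (ŷ(ŷ²−1)(3x̂²−5)/32, −x̂(x̂²−1)(3ŷ²−5)/32 − (x̂−1)/4) satisfies: (i) its second component equals 1/2 at x̂ = −1 for all ŷ, and vanishes at x̂ = 1 for all ŷ; (ii) its first component vanishes whenever ŷ = −1 or ŷ = 1; (iii) its scalar curl satisfies ∇×φ̂_{0,0}(x̂,ŷ) = −(9/16)(x̂²−1)(ŷ²−1), and in particular ∇×φ̂_{0,0} vanishes whenever x̂ ∈ {−1,1} or ŷ ∈ {−1,1}. Hence φ̂_{0,0} has nonzero tangential trace only on the edge x̂ = −1 of [−1,1]² and vanishing curl trace on all four edges. -/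

import Mathlib

/-- Scalar curl of a planar vector field: `∇×u = ∂u₂/∂x̂ − ∂u₁/∂ŷ`. -/
noncomputable def scurl (u : ℝ × ℝ → ℝ × ℝ) (z : ℝ × ℝ) : ℝ :=
  deriv (fun t => (u (t, z.2)).2) z.1 - deriv (fun t => (u (z.1, t)).1) z.2

/-- Lowest-order function edge mode `φ̂_{0,0}`. -/
noncomputable def phi00 (z : ℝ × ℝ) : ℝ × ℝ :=
  (z.2 * (z.2 ^ 2 - 1) * (3 * z.1 ^ 2 - 5) / 32,
   -(z.1 * (z.1 ^ 2 - 1) * (3 * z.2 ^ 2 - 5)) / 32 - (z.1 - 1) / 4)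

theorem scurl_eq_of_hasDerivAt {u : ℝ × ℝ → ℝ × ℝ} {z : ℝ × ℝ} {a b : ℝ}
    (ha : HasDerivAt (fun t => (u (t, z.2)).2) a z.1)
    (hb : HasDerivAt (fun t => (u (z.1, t)).1) b z.2) : scurl u z = a - b := by
  rw [scurl, ha.deriv, hb.deriv]

theorem hasDerivAt_mul_sq_sub_one (t : ℝ) :
    HasDerivAt (fun s : ℝ => s * (s ^ 2 - 1)) (3 * t ^ 2 - 1) t :=
  ((hasDerivAt_id t).mul ((hasDerivAt_pow 2 t).sub_const 1)).congr_deriv <| by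
    simp only [id_eq, Nat.cast_ofNat]
    ring

theorem hasDerivAt_phi00_snd (x y : ℝ) :
    HasDerivAt (fun t => (phi00 (t, y)).2) (-(3 * x ^ 2 - 1) * (3 * y ^ 2 - 5) / 32 - 1 / 4) x :=
  ((((hasDerivAt_mul_sq_sub_one x).mul_const (3 * y ^ 2 - 5)).neg.div_const 32).sub
    (((hasDerivAt_id x).sub_const 1).div_const 4)).congr_deriv (by ring)

theorem hasDerivAt_phi00_fst (x y : ℝ) :
    HasDerivAt (fun t => (phi00 (x, t)).1) ((3 * y ^ 2 - 1) * (3 * x ^ 2 - 5) / 32) y :=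
  ((hasDerivAt_mul_sq_sub_one y).mul_const (3 * x ^ 2 - 5)).div_const 32

theorem scurl_phi00 (z : ℝ × ℝ) :
    scurl phi00 z = -(9 / 16) * (z.1 ^ 2 - 1) * (z.2 ^ 2 - 1) := by
  rw [scurl_eq_of_hasDerivAt (hasDerivAt_phi00_snd z.1 z.2) (hasDerivAt_phi00_fst z.1 z.2)]
  ring

/-- Trace properties of `φ̂_{0,0}`: (i) second component equals `1/2` at `x̂ = −1` and `0` at
`x̂ = 1`; (ii) first component vanishes at `ŷ = ±1`;
(iii) `∇×φ̂_{0,0} = −(9/16)(x̂²−1)(ŷ²−1)`, which vanishes on all four edges of `[−1,1]²`. -/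
theorem phi00_traces :
    (∀ yh : ℝ, (phi00 (-1, yh)).2 = 1 / 2 ∧ (phi00 (1, yh)).2 = 0) ∧
    (∀ xh : ℝ, (phi00 (xh, -1)).1 = 0 ∧ (phi00 (xh, 1)).1 = 0) ∧
    (∀ z : ℝ × ℝ, scurl phi00 z = -(9 / 16) * (z.1 ^ 2 - 1) * (z.2 ^ 2 - 1)) ∧
    (∀ z : ℝ × ℝ, (z.1 = -1 ∨ z.1 = 1 ∨ z.2 = -1 ∨ z.2 = 1) → scurl phi00 z = 0) := by
  refine ⟨fun yh => ?_, fun xh => ?_, scurl_phi00, fun z hz => ?_⟩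
  · constructor <;> norm_num [phi00]
  · constructor <;> norm_num [phi00]
  · rw [scurl_phi00]
    rcases hz with h | h | h | h <;> norm_num [h]
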